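/- arXiv:2411.17965 — 3 statements merged into one kernel-verified Lean document; each statement's English description precedes it below -/
import Mathlib

section
/- Let K be an odd positive integer, ε ≥ 0, and let m be a real number with m ≥ (K+1)/2. Then for every (p, p') ∈ F(ε,0): Σ_{l=0}^{(K−1)/2} ( e^{mε} b(l;K,p') − b(l;K,p) ) + Σ_{l=(K+1)/2}^{K} ( b(l;K,p) − e^{mε} b(l;K,p') ) ≤ e^{mε} − 1. (This is the i.i.d. privacy cost objective evaluated at the constant noise function γ ≡ 1; hence when m ≥ (K+1)/2 one may output the exact majority of K i.i.d. ε-differentially-private mechanisms with no added noise while remaining mε-differentially private.) -/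
open Finset

/-- Binomial(K,p) probability mass at `l`. -/
noncomputable def binomPMF (K : ℕ) (p : ℝ) (l : ℕ) : ℝ :=
  (K.choose l : ℝ) * p ^ l * (1 - p) ^ (K - l)

/-- The feasible region `F(ε,0)`: pairs `(p,p') ∈ [0,1]²` consistent with pure
`ε`-differential privacy. -/
def Feas0 (ε p p' : ℝ) : Prop :=
  0 ≤ p ∧ p ≤ 1 ∧ 0 ≤ p' ∧ p' ≤ 1 ∧
  p ≤ Real.exp ε * p' ∧ p' ≤ Real.exp ε * p ∧
  1 - p ≤ Real.exp ε * (1 - p') ∧ 1 - p' ≤ Real.exp ε * (1 - p)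

/-!
Since `∑ l < h, b(l) = 1 - T` for the upper tail `T(p) = P(Bin(K,p) ≥ h)` with `h = (K+1)/2`,
the objective equals `e^{mε} - 1 + 2 (T(p) - e^{mε} T(p'))`, so it suffices that
`T(p) ≤ e^{hε} T(p')`. Binomial thinning, `Bin(Bin(n,q), s) = Bin(n, qs)`, writes
`T(qs) = ∑ₓ b(x; n, q) · P(Bin(x,s) ≥ h)`. Bounding the inner probability above by `1` and
below by `s^h` (for `x ≥ h`) shows that `T` is nondecreasing and that `p ↦ T(p) / p^h` is
nonincreasing; together with `p ≤ e^ε p'` these give the claim.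
-/

noncomputable def binomTail (n h : ℕ) (p : ℝ) : ℝ :=
  ∑ l ∈ Icc h n, binomPMF n p l

lemma Finset.sum_Icc_eq_sum_range {M : Type*} [AddCommMonoid M] (f : ℕ → M) {a b : ℕ}
    (hab : a ≤ b) : ∑ x ∈ Icc a b, f x = ∑ j ∈ range (b - a + 1), f (a + j) := by
  rw [← Finset.Ico_add_one_right_eq_Icc, Finset.sum_Ico_eq_sum_range, Nat.sub_add_comm hab]

lemma Nat.choose_sub_le_choose_add {n h j : ℕ} (hn : h + j ≤ n) :
    (n - h).choose j ≤ n.choose (h + j) := by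
  have hpos : 0 < n.choose h := Nat.choose_pos (by omega)
  refine Nat.le_of_mul_le_mul_left ?_ hpos
  calc n.choose h * (n - h).choose j = n.choose (h + j) * (h + j).choose h := by
        rw [Nat.choose_mul (Nat.le_add_right h j), Nat.add_sub_cancel_left]
    _ ≤ n.choose (h + j) * n.choose h := Nat.mul_le_mul_left _ (Nat.choose_le_choose h hn)
    _ = n.choose h * n.choose (h + j) := Nat.mul_comm _ _

section binomial

variable {n h : ℕ} {p q s : ℝ}

lemma binomPMF_nonneg (hp0 : 0 ≤ p) (hp1 : p ≤ 1) (l : ℕ) : 0 ≤ binomPMF n p l := by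
  have : 0 ≤ 1 - p := by linarith
  unfold binomPMF
  positivity

lemma sum_range_binomPMF (n : ℕ) (p : ℝ) : ∑ l ∈ range (n + 1), binomPMF n p l = 1 := by
  calc ∑ l ∈ range (n + 1), binomPMF n p l = (p + (1 - p)) ^ n := by
        rw [add_pow]
        exact sum_congr rfl fun l _ => by unfold binomPMF; ring
    _ = 1 := by norm_num

lemma sum_range_binomPMF_add_binomTail (hh : h ≤ n + 1) (p : ℝ) :
    ∑ l ∈ range h, binomPMF n p l + binomTail n h p = 1 := by
  rw [binomTail, ← Finset.Ico_add_one_right_eq_Icc, Finset.sum_range_add_sum_Ico _ hh,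
    sum_range_binomPMF]

lemma binomTail_nonneg (hp0 : 0 ≤ p) (hp1 : p ≤ 1) : 0 ≤ binomTail n h p :=
  sum_nonneg fun l _ => binomPMF_nonneg hp0 hp1 l

lemma binomTail_le_one (hp0 : 0 ≤ p) (hp1 : p ≤ 1) : binomTail n h p ≤ 1 := by
  calc binomTail n h p ≤ ∑ l ∈ range (n + 1), binomPMF n p l :=
        sum_le_sum_of_subset_of_nonneg (fun l hl => by simp only [mem_Icc, mem_range] at *; omega)
          fun l _ _ => binomPMF_nonneg hp0 hp1 l
    _ = 1 := sum_range_binomPMF n p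

lemma pow_le_binomTail (hh : h ≤ n) (hs0 : 0 ≤ s) (hs1 : s ≤ 1) :
    s ^ h ≤ binomTail n h s := by
  have : 0 ≤ 1 - s := by linarith
  calc s ^ h = s ^ h * (s + (1 - s)) ^ (n - h) := by simp
    _ = ∑ j ∈ range (n - h + 1),
          ((n - h).choose j : ℝ) * s ^ (h + j) * (1 - s) ^ (n - (h + j)) := by
        rw [add_pow, mul_sum]
        refine sum_congr rfl fun j _ => ?_
        rw [pow_add, Nat.sub_add_eq]
        ring
    _ ≤ ∑ j ∈ range (n - h + 1), binomPMF n s (h + j) := by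
        refine sum_le_sum fun j hj => ?_
        have hj : h + j ≤ n := by simp only [mem_range] at hj; omega
        unfold binomPMF
        gcongr
        exact_mod_cast Nat.choose_sub_le_choose_add hj
    _ = binomTail n h s := (sum_Icc_eq_sum_range _ hh).symm

lemma sum_binomPMF_mul_binomPMF {l : ℕ} (hl : l ≤ n) (q s : ℝ) :
    ∑ x ∈ Icc l n, binomPMF n q x * binomPMF x s l = binomPMF n (q * s) l := by
  -- `C(n, l+j) C(l+j, l) = C(n, l) C(n-l, j)` turns the sum into an expansion of `(1 - q s)^(n-l)`.
  have hterm : ∀ j ∈ range (n - l + 1), binomPMF n q (l + j) * binomPMF (l + j) s l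
      = (n.choose l : ℝ) * (q * s) ^ l *
          ((q * (1 - s)) ^ j * (1 - q) ^ (n - l - j) * ((n - l).choose j : ℝ)) := by
    intro j _
    have hchoose : (n.choose (l + j) : ℝ) * ((l + j).choose l : ℝ)
        = (n.choose l : ℝ) * ((n - l).choose j : ℝ) := by
      exact_mod_cast (Nat.choose_mul (Nat.le_add_right l j)).trans (by rw [Nat.add_sub_cancel_left])
    unfold binomPMF
    rw [Nat.add_sub_cancel_left, Nat.sub_add_eq, pow_add, mul_pow, mul_pow]
    linear_combination (q ^ l * q ^ j * s ^ l * (1 - s) ^ j * (1 - q) ^ (n - l - j)) * hchoose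
  rw [sum_Icc_eq_sum_range _ hl, sum_congr rfl hterm, ← mul_sum, ← add_pow,
    show q * (1 - s) + (1 - q) = 1 - q * s by ring, binomPMF, mul_assoc]

lemma binomTail_mul (n h : ℕ) (q s : ℝ) :
    binomTail n h (q * s) = ∑ x ∈ Icc h n, binomPMF n q x * binomTail x h s := by
  calc binomTail n h (q * s)
      = ∑ l ∈ Icc h n, ∑ x ∈ Icc l n, binomPMF n q x * binomPMF x s l :=
        sum_congr rfl fun l hl => (sum_binomPMF_mul_binomPMF (mem_Icc.mp hl).2 q s).symm
    _ = ∑ x ∈ Icc h n, ∑ l ∈ Icc h x, binomPMF n q x * binomPMF x s l :=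
        sum_comm' fun l x => by simp only [mem_Icc]; omega
    _ = ∑ x ∈ Icc h n, binomPMF n q x * binomTail x h s :=
        sum_congr rfl fun x _ => (mul_sum _ _ _).symm

lemma binomTail_mono (hp0 : 0 ≤ p) (hpq : p ≤ q) (hq1 : q ≤ 1) :
    binomTail n h p ≤ binomTail n h q := by
  rcases (hp0.trans hpq).eq_or_lt with hq0 | hq0
  · rw [le_antisymm (hq0 ▸ hpq) hp0, ← hq0]
  have hs0 : 0 ≤ p / q := div_nonneg hp0 hq0.le
  have hs1 : p / q ≤ 1 := (div_le_one hq0).mpr hpq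
  calc binomTail n h p = ∑ x ∈ Icc h n, binomPMF n q x * binomTail x h (p / q) := by
        rw [← binomTail_mul, mul_div_cancel₀ p hq0.ne']
    _ ≤ ∑ x ∈ Icc h n, binomPMF n q x * 1 :=
        sum_le_sum fun x _ => mul_le_mul_of_nonneg_left (binomTail_le_one hs0 hs1)
          (binomPMF_nonneg hq0.le hq1 x)
    _ = binomTail n h q := by simp only [mul_one, binomTail]

lemma pow_mul_binomTail_le_binomTail_mul (hq0 : 0 ≤ q) (hq1 : q ≤ 1) (hs0 : 0 ≤ s)
    (hs1 : s ≤ 1) : s ^ h * binomTail n h q ≤ binomTail n h (q * s) := by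
  rw [binomTail_mul, binomTail, mul_sum]
  refine sum_le_sum fun x hx => ?_
  rw [mul_comm]
  exact mul_le_mul_of_nonneg_left (pow_le_binomTail (mem_Icc.mp hx).1 hs0 hs1)
    (binomPMF_nonneg hq0 hq1 x)

lemma binomTail_le_pow_mul_binomTail {c p' : ℝ} (hc : 1 ≤ c) (hp0 : 0 ≤ p) (hp1 : p ≤ 1)
    (hp'0 : 0 ≤ p') (hp'1 : p' ≤ 1) (hpp' : p ≤ c * p') :
    binomTail n h p ≤ c ^ h * binomTail n h p' := by
  rcases le_or_gt p p' with hle | hlt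
  · calc binomTail n h p ≤ binomTail n h p' := binomTail_mono hp0 hle hp'1
      _ ≤ c ^ h * binomTail n h p' := 
          le_mul_of_one_le_left (binomTail_nonneg hp'0 hp'1) (one_le_pow₀ hc)
  have hpos : 0 < p := hp'0.trans_lt hlt
  have hratio : 1 ≤ c * (p' / p) := by rw [← mul_div_assoc, le_div_iff₀ hpos]; linarith
  calc binomTail n h p ≤ (c * (p' / p)) ^ h * binomTail n h p :=
        le_mul_of_one_le_left (binomTail_nonneg hp0 hp1) (one_le_pow₀ hratio)
    _ = c ^ h * ((p' / p) ^ h * binomTail n h p) := by ring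
    _ ≤ c ^ h * binomTail n h (p * (p' / p)) := by
        gcongr
        exact pow_mul_binomTail_le_binomTail_mul hp0 hp1 (div_nonneg hp'0 hpos.le)
          ((div_le_one hpos).mpr hlt.le)
    _ = c ^ h * binomTail n h p' := by rw [mul_div_cancel₀ p' hpos.ne']

end binomial

theorem statement5_general (K : ℕ) (hK : Odd K)
    (ε m : ℝ) (hε : 0 ≤ ε) (hm : ((K : ℝ) + 1) / 2 ≤ m) :
    ∀ p p' : ℝ, Feas0 ε p p' →
      (∑ l ∈ Finset.range ((K + 1) / 2),
          (Real.exp (m * ε) * binomPMF K p' l - binomPMF K p l))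
        + (∑ l ∈ Finset.Icc ((K + 1) / 2) K,
          (binomPMF K p l - Real.exp (m * ε) * binomPMF K p' l))
        ≤ Real.exp (m * ε) - 1 := by
  rintro p p' ⟨hp0, hp1, hp'0, hp'1, hpp', -⟩
  obtain ⟨t, rfl⟩ := hK
  have hh : (2 * t + 1 + 1) / 2 = t + 1 := by omega
  have hexp : Real.exp ε ^ (t + 1) ≤ Real.exp (m * ε) := by
    rw [← Real.exp_nat_mul, Real.exp_le_exp]
    push_cast at hm ⊢
    exact mul_le_mul_of_nonneg_right (by linarith) hε
  have htail : binomTail (2 * t + 1) (t + 1) p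
      ≤ Real.exp (m * ε) * binomTail (2 * t + 1) (t + 1) p' :=
    (binomTail_le_pow_mul_binomTail (Real.one_le_exp hε) hp0 hp1 hp'0 hp'1 hpp').trans
      (mul_le_mul_of_nonneg_right hexp (binomTail_nonneg hp'0 hp'1))
  have hsplit := sum_range_binomPMF_add_binomTail (n := 2 * t + 1) (h := t + 1) (by omega)
  rw [hh, sum_sub_distrib, sum_sub_distrib, ← mul_sum, ← mul_sum]
  unfold binomTail at htail hsplit
  linear_combination Real.exp (m * ε) * hsplit p' - hsplit p + 2 * htail

/-- for large privacy allowance `m ≥ (K+1)/2`, the i.i.d. privacy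
cost objective at the constant noise function `γ ≡ 1` is bounded by
`e^{mε} − 1` on all of `F(ε,0)`: the exact majority of `K` i.i.d.
`ε`-DP mechanisms is `mε`-differentially private. -/
theorem statement5 (K : ℕ) (hK : Odd K) (hKpos : 0 < K)
    (ε m : ℝ) (hε : 0 ≤ ε) (hm : ((K : ℝ) + 1) / 2 ≤ m) :
    ∀ p p' : ℝ, Feas0 ε p p' →
      (∑ l ∈ Finset.range ((K + 1) / 2),
          (Real.exp (m * ε) * binomPMF K p' l - binomPMF K p l))
        + (∑ l ∈ Finset.Icc ((K + 1) / 2) K,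
          (binomPMF K p l - Real.exp (m * ε) * binomPMF K p' l))
        ≤ Real.exp (m * ε) - 1 :=
  statement5_general K hK ε m hε hm
end

section
/- Let K be an odd positive integer, ε ≥ 0, Δ ∈ [0,1), m ≥ 0 a real number, and γ : {0,…,K} → [0,1] arbitrary, and let f(p, p'; γ) = Σ_{l=0}^{(K−1)/2} ( e^{mε} α_l(p') − α_l(p) ) γ(l) + Σ_{l=(K+1)/2}^{K} ( α_l(p) − e^{mε} α_l(p') ) γ(l). Then: (i) for every permutation π of {1,…,K} and all p, p' ∈ [0,1]^K, f(p∘π, p'∘π; γ) = f(p, p'; γ); and (ii) there exists a finite set P of pairs of vectors (q, q') ∈ ([0,1]^K)², with cardinality |P| ≤ C(K+7, 7), such that every (q,q') ∈ P has (q_i, q_i') in the eight-element corner set C(ε,Δ) for all i, and for all p, p' ∈ [0,1]^K with (p_i, p_i') ∈ F(ε,Δ) for all i, f(p, p'; γ) ≤ max_{(q,q') ∈ P} f(q, q'; γ). Hence the infinitely many privacy constraints reduce to a set of constraints of size O(K^7). -/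
open Finset

/-- Poisson–Binomial probability mass at `l` for parameters `p : Fin K → ℝ`. -/
noncomputable def alphaPB (K : ℕ) (p : Fin K → ℝ) (l : ℕ) : ℝ :=
  ∑ A ∈ Finset.powersetCard l (Finset.univ : Finset (Fin K)),
    (∏ i ∈ A, p i) * ∏ j ∈ Aᶜ, (1 - p j)

/-- The feasible region `F(ε,Δ)`: pairs `(p,p') ∈ [0,1]²` consistent with
`(ε,Δ)`-differential privacy. -/
def Feas (ε Δ p p' : ℝ) : Prop :=
  0 ≤ p ∧ p ≤ 1 ∧ 0 ≤ p' ∧ p' ≤ 1 ∧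
  p ≤ Real.exp ε * p' + Δ ∧ p' ≤ Real.exp ε * p + Δ ∧
  1 - p ≤ Real.exp ε * (1 - p') + Δ ∧ 1 - p' ≤ Real.exp ε * (1 - p) + Δ

/-- The eight corner points of the feasible region `F(ε,Δ)`. -/
noncomputable def Corners (ε Δ : ℝ) : Set (ℝ × ℝ) :=
  {(0, 0), (1, 1), (0, Δ), (Δ, 0), (1 - Δ, 1), (1, 1 - Δ),
   ((Real.exp ε + Δ) / (Real.exp ε + 1), (1 - Δ) / (Real.exp ε + 1)),
   ((1 - Δ) / (Real.exp ε + 1), (Real.exp ε + Δ) / (Real.exp ε + 1))}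

/-- The privacy cost objective `f(p, p'; γ)`. -/
noncomputable def privCost (K : ℕ) (m ε : ℝ) (γ : ℕ → ℝ) (p p' : Fin K → ℝ) : ℝ :=
  (∑ l ∈ Finset.range ((K + 1) / 2),
      (Real.exp (m * ε) * alphaPB K p' l - alphaPB K p l) * γ l)
  + ∑ l ∈ Finset.Icc ((K + 1) / 2) K,
      (alphaPB K p l - Real.exp (m * ε) * alphaPB K p' l) * γ l

/-! The objective splits as `G p - e^{mε} G p'`, where `G` is a fixed linear combination of
Poisson–Binomial masses, and every such mass is affine in each single coordinate `p i`. So, with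
all other coordinates frozen, the objective is an affine function of the pair `(p i, p' i)`; its
maximum over the polygon `F(ε,Δ)` is attained at a vertex, and moving the coordinates to vertices
one at a time never decreases it. By permutation invariance the resulting vector of vertices may
be sorted, so only the at most `C(K+7,7)` multisets of vertices matter. -/

open Function

theorem alphaPB_comp_perm (K : ℕ) (p : Fin K → ℝ) (π : Equiv.Perm (Fin K)) (l : ℕ) :
    alphaPB K (p ∘ π) l = alphaPB K p l := by
  unfold alphaPB
  conv_rhs => rw [← map_univ_equiv π, powersetCard_map, sum_map]
  refine sum_congr rfl fun A _ => ?_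
  have hcompl : (A.map π.toEmbedding)ᶜ = Aᶜ.map π.toEmbedding := by
    ext x; simp
  simp [hcompl, prod_map]

theorem privCost_comp_perm (K : ℕ) (m ε : ℝ) (γ : ℕ → ℝ) (π : Equiv.Perm (Fin K))
    (p p' : Fin K → ℝ) : privCost K m ε γ (p ∘ π) (p' ∘ π) = privCost K m ε γ p p' := by
  simp only [privCost, alphaPB_comp_perm]

section CoordAffine

variable (ι : Type*) [DecidableEq ι]

def coordAffine : Submodule ℝ ((ι → ℝ) → ℝ) where
  carrier := {Φ | ∀ p i t, Φ (update p i t) = (1 - t) * Φ (update p i 0) + t * Φ (update p i 1)}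
  add_mem' {Φ Ψ} hΦ hΨ p i t := by simp only [Pi.add_apply, hΦ p i t, hΨ p i t]; ring
  zero_mem' _ _ _ := by simp
  smul_mem' c Φ hΦ p i t := by simp only [Pi.smul_apply, smul_eq_mul, hΦ p i t]; ring

variable {ι}

theorem mem_coordAffine_of_exists {Φ : (ι → ℝ) → ℝ}
    (h : ∀ p i, ∃ a b : ℝ, ∀ t, Φ (update p i t) = a * t + b) : Φ ∈ coordAffine ι := by
  intro p i t
  obtain ⟨a, b, hab⟩ := h p i
  rw [hab, hab, hab]; ring

theorem prod_mul_prod_compl_mem_coordAffine [Fintype ι] (A : Finset ι) :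
    (fun p : ι → ℝ => (∏ i ∈ A, p i) * ∏ j ∈ Aᶜ, (1 - p j)) ∈ coordAffine ι := by
  refine mem_coordAffine_of_exists fun p i => ?_
  have hflip (t : ℝ) : (fun j => 1 - update p i t j) = update (fun j => 1 - p j) i (1 - t) :=
    comp_update (fun x => 1 - x) p i t
  by_cases hi : i ∈ A
  · have hic : i ∉ Aᶜ := by simpa using hi
    refine ⟨(∏ j ∈ A \ {i}, p j) * ∏ j ∈ Aᶜ, (1 - p j), 0, fun t => ?_⟩
    rw [prod_update_of_mem hi, hflip, prod_update_of_notMem hic]; ring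
  · have hic : i ∈ Aᶜ := by simpa using hi
    refine ⟨-((∏ j ∈ A, p j) * ∏ j ∈ Aᶜ \ {i}, (1 - p j)),
      (∏ j ∈ A, p j) * ∏ j ∈ Aᶜ \ {i}, (1 - p j), fun t => ?_⟩
    rw [prod_update_of_notMem hi, hflip, prod_update_of_mem hic]; ring

end CoordAffine

theorem alphaPB_mem_coordAffine (K l : ℕ) : (alphaPB K · l) ∈ coordAffine (Fin K) := by
  have : (alphaPB K · l) = ∑ A ∈ powersetCard l univ,
      fun p : Fin K → ℝ => (∏ i ∈ A, p i) * ∏ j ∈ Aᶜ, (1 - p j) := by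
    ext p; simp [alphaPB, Finset.sum_apply]
  rw [this]
  exact Submodule.sum_mem _ fun A _ => prod_mul_prod_compl_mem_coordAffine A

noncomputable def signedMass (K : ℕ) (γ : ℕ → ℝ) (p : Fin K → ℝ) : ℝ :=
  ∑ l ∈ Icc ((K + 1) / 2) K, alphaPB K p l * γ l - ∑ l ∈ range ((K + 1) / 2), alphaPB K p l * γ l

theorem privCost_eq_signedMass (K : ℕ) (m ε : ℝ) (γ : ℕ → ℝ) (p p' : Fin K → ℝ) :
    privCost K m ε γ p p' = signedMass K γ p - Real.exp (m * ε) * signedMass K γ p' := by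
  simp only [privCost, signedMass, sub_mul, sum_sub_distrib, mul_sub, mul_sum, mul_assoc]
  ring

theorem signedMass_mem_coordAffine (K : ℕ) (γ : ℕ → ℝ) :
    signedMass K γ ∈ coordAffine (Fin K) := by
  have : signedMass K γ = ∑ l ∈ Icc ((K + 1) / 2) K, γ l • (alphaPB K · l)
      - ∑ l ∈ range ((K + 1) / 2), γ l • (alphaPB K · l) := by
    ext p; simp [signedMass, Finset.sum_apply, mul_comm]
  rw [this]
  have hmem (l : ℕ) : γ l • (alphaPB K · l) ∈ coordAffine (Fin K) :=
    Submodule.smul_mem _ _ (alphaPB_mem_coordAffine K l)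
  exact sub_mem (Submodule.sum_mem _ fun l _ => hmem l) (Submodule.sum_mem _ fun l _ => hmem l)

theorem Feas.swap {ε Δ p p' : ℝ} (h : Feas ε Δ p p') : Feas ε Δ p' p := by
  obtain ⟨h₁, h₂, h₃, h₄, h₅, h₆, h₇, h₈⟩ := h
  exact ⟨h₃, h₄, h₁, h₂, h₆, h₅, h₈, h₇⟩

theorem swap_mem_corners {ε Δ : ℝ} {z : ℝ × ℝ} (h : z ∈ Corners ε Δ) :
    z.swap ∈ Corners ε Δ := by
  simp only [Corners, Set.mem_insert_iff, Set.mem_singleton_iff] at h ⊢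
  rcases h with rfl | rfl | rfl | rfl | rfl | rfl | rfl | rfl <;> simp

/-- The point `((e + Δ) / (e + 1), (1 - Δ) / (e + 1))` is where the edges `p = e p' + Δ` and
`1 - p' = e (1 - p) + Δ` of `F(ε,Δ)` meet. -/
theorem mid_corner_eq {e Δ : ℝ} (he : 0 < e + 1) :
    (e + Δ) / (e + 1) = e * ((1 - Δ) / (e + 1)) + Δ ∧
      (1 - Δ) / (e + 1) + (e + Δ) / (e + 1) = 1 := by
  constructor <;> field_simp <;> ring

theorem feas_of_mem_corners {ε Δ : ℝ} (hε : 0 ≤ ε) (hΔ0 : 0 ≤ Δ) (hΔ1 : Δ < 1) {z : ℝ × ℝ}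
    (hz : z ∈ Corners ε Δ) : Feas ε Δ z.1 z.2 := by
  have he : 1 ≤ Real.exp ε := Real.one_le_exp hε
  have hmid : Feas ε Δ ((Real.exp ε + Δ) / (Real.exp ε + 1)) ((1 - Δ) / (Real.exp ε + 1)) := by
    obtain ⟨hv_eq, huv⟩ := mid_corner_eq (e := Real.exp ε) (Δ := Δ) (by positivity)
    set u := (1 - Δ) / (Real.exp ε + 1)
    set v := (Real.exp ε + Δ) / (Real.exp ε + 1)
    have hu0 : 0 ≤ u := by positivity
    have hv0 : 0 ≤ v := by rw [hv_eq]; positivity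
    have huv_le : u ≤ v := by nlinarith
    have hv_le : v ≤ Real.exp ε * v := le_mul_of_one_le_left hv0 he
    have h1v : 1 - v = u := by linarith
    have h1u : 1 - u = v := by linarith
    rw [Feas, h1u, h1v]
    refine ⟨?_, ?_, ?_, ?_, ?_, ?_, ?_, ?_⟩ <;> linarith
  have h1Δ : Δ ≤ Real.exp ε * (1 - Δ) + Δ := by nlinarith
  simp only [Corners, Set.mem_insert_iff, Set.mem_singleton_iff] at hz
  rcases hz with rfl | rfl | rfl | rfl | rfl | rfl | rfl | rfl <;>
    first
    | exact hmid
    | exact hmid.swap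
    | refine ⟨?_, ?_, ?_, ?_, ?_, ?_, ?_, ?_⟩ <;> dsimp only <;> nlinarith

theorem exists_mem_corners_le_of_nonneg_of_nonpos {ε Δ b c p p' : ℝ} (hε : 0 ≤ ε)
    (hb : 0 ≤ b) (hc : c ≤ 0) (h : Feas ε Δ p p') :
    ∃ z ∈ Corners ε Δ, b * p + c * p' ≤ b * z.1 + c * z.2 := by
  obtain ⟨hp0, hp1, hp'0, -, hp_le, -, -, hp'_le⟩ := h
  set e := Real.exp ε
  have he : 1 ≤ e := Real.one_le_exp hε
  obtain ⟨hv_eq, huv⟩ := mid_corner_eq (e := e) (Δ := Δ) (by positivity)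
  set u := (1 - Δ) / (e + 1)
  set v := (e + Δ) / (e + 1)
  have hev : e * v = e - 1 + Δ + u := by linear_combination e * huv + hv_eq - huv
  have hvu : (v, u) ∈ Corners ε Δ := by
    simp only [Corners, Set.mem_insert_iff, Set.mem_singleton_iff]; tauto
  have hΔ0 : (Δ, (0 : ℝ)) ∈ Corners ε Δ := by simp [Corners]
  have h1Δ : ((1 : ℝ), 1 - Δ) ∈ Corners ε Δ := by simp [Corners]
  rcases le_or_gt p' u with hpu | hpu
  · rcases le_or_gt 0 (b * e + c) with hs | hs
    · refine ⟨(v, u), hvu, ?_⟩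
      nlinarith [mul_le_mul_of_nonneg_left hp_le hb, mul_le_mul_of_nonneg_left hpu hs]
    · refine ⟨(Δ, 0), hΔ0, ?_⟩
      nlinarith [mul_le_mul_of_nonneg_left hp_le hb, mul_le_mul_of_nonpos_right hp'0 hs.le]
  rcases le_or_gt p' (1 - Δ) with hpd | hpd
  · have hep : e * p ≤ e - 1 + p' + Δ := by linarith
    rcases le_or_gt 0 (b + c * e) with hs | hs
    · refine ⟨(1, 1 - Δ), h1Δ, ?_⟩
      nlinarith [mul_le_mul_of_nonneg_left hep hb, mul_le_mul_of_nonneg_left hpd hs]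
    · refine ⟨(v, u), hvu, le_of_mul_le_mul_left ?_ (by positivity : 0 < e)⟩
      nlinarith [mul_le_mul_of_nonneg_left hep hb, mul_le_mul_of_nonpos_left hpu.le hs.le]
  · refine ⟨(1, 1 - Δ), h1Δ, ?_⟩
    nlinarith [mul_le_mul_of_nonneg_left hp1 hb, mul_le_mul_of_nonpos_left hpd.le hc]

theorem exists_mem_corners_le {ε Δ p p' : ℝ} (hε : 0 ≤ ε) (b c : ℝ) (h : Feas ε Δ p p') :
    ∃ z ∈ Corners ε Δ, b * p + c * p' ≤ b * z.1 + c * z.2 := by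
  obtain ⟨hp0, hp1, hp'0, hp'1, -⟩ := id h
  rcases le_total 0 b with hb | hb <;> rcases le_total 0 c with hc | hc
  · exact ⟨(1, 1), by simp [Corners], by nlinarith⟩
  · exact exists_mem_corners_le_of_nonneg_of_nonpos hε hb hc h
  · obtain ⟨z, hz, hle⟩ := exists_mem_corners_le_of_nonneg_of_nonpos hε hc hb h.swap
    exact ⟨z.swap, swap_mem_corners hz, by simp only [Prod.fst_swap, Prod.snd_swap]; linarith⟩
  · exact ⟨(0, 0), by simp [Corners], by nlinarith⟩

theorem exists_mem_corners_privCost_le_update {K : ℕ} {ε Δ : ℝ} (hε : 0 ≤ ε) (m : ℝ)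
    (γ : ℕ → ℝ) (z : Fin K → ℝ × ℝ) (i : Fin K) (hz : Feas ε Δ (z i).1 (z i).2) :
    ∃ w ∈ Corners ε Δ, privCost K m ε γ (Prod.fst ∘ z) (Prod.snd ∘ z) ≤
      privCost K m ε γ (Prod.fst ∘ update z i w) (Prod.snd ∘ update z i w) := by
  set G := signedMass K γ
  have hG := signedMass_mem_coordAffine K γ
  set p := Prod.fst ∘ z
  set p' := Prod.snd ∘ z
  set c := Real.exp (m * ε)
  obtain ⟨w, hw, hle⟩ := exists_mem_corners_le hε
    (G (update p i 1) - G (update p i 0)) (-c * (G (update p' i 1) - G (update p' i 0))) hz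
  refine ⟨w, hw, ?_⟩
  have hp : p = update p i (z i).1 := (update_eq_self i p).symm
  have hp' : p' = update p' i (z i).2 := (update_eq_self i p').symm
  rw [comp_update, comp_update, privCost_eq_signedMass, privCost_eq_signedMass, hG p i,
    hG p' i]
  conv_lhs => rw [hp, hp', hG p i, hG p' i]
  linear_combination hle

theorem exists_forall_mem_le_of_update {ι α β : Type*} [Fintype ι] [DecidableEq ι] [Preorder β]
    {S T : Set α} {Φ : (ι → α) → β} (hTS : T ⊆ S)
    (hstep : ∀ z i, z i ∈ S → ∃ a ∈ T, Φ z ≤ Φ (update z i a))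
    (z : ι → α) (hz : ∀ i, z i ∈ S) : ∃ w : ι → α, (∀ i, w i ∈ T) ∧ Φ z ≤ Φ w := by
  suffices ∀ s : Finset ι, ∀ z : ι → α, (∀ i, z i ∈ S) → (∀ i ∉ s, z i ∈ T) →
      ∃ w : ι → α, (∀ i, w i ∈ T) ∧ Φ z ≤ Φ w from this univ z hz (by simp)
  intro s
  induction s using Finset.induction_on with
  | empty => exact fun z _ hT => ⟨z, fun i => hT i (notMem_empty i), le_rfl⟩
  | insert j s _ ih =>
    intro z hS hT
    obtain ⟨a, ha, hle⟩ := hstep z j (hS j)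
    obtain ⟨w, hw, hle'⟩ := ih (update z j a)
      ((forall_update_iff z fun _ x => x ∈ S).2 ⟨hTS ha, fun i _ => hS i⟩)
      fun i hi => by
        rcases eq_or_ne i j with rfl | hij
        · simpa using ha
        · simpa [hij] using hT i (by simp [hij, hi])
    exact ⟨w, hw, hle.trans hle'⟩

noncomputable def cornerVec (ε Δ : ℝ) : Fin 8 → ℝ × ℝ :=
  ![(0, 0), (1, 1), (0, Δ), (Δ, 0), (1 - Δ, 1), (1, 1 - Δ),
    ((Real.exp ε + Δ) / (Real.exp ε + 1), (1 - Δ) / (Real.exp ε + 1)),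
    ((1 - Δ) / (Real.exp ε + 1), (Real.exp ε + Δ) / (Real.exp ε + 1))]

theorem range_cornerVec (ε Δ : ℝ) : Set.range (cornerVec ε Δ) = Corners ε Δ := by
  ext z; simp [cornerVec, Corners, Matrix.range_cons, Matrix.range_empty]; tauto

/-- Stars and bars: a monotone tuple is determined by its multiset of values. -/
theorem card_filter_monotone_le {α : Type*} [Fintype α] [LinearOrder α] (K : ℕ) :
    #{c : Fin K → α | Monotone c} ≤ (Fintype.card α + K - 1).choose K := by
  calc #{c : Fin K → α | Monotone c}
      ≤ #(univ : Finset (Sym α K)) := by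
        refine card_le_card_of_injOn (fun c => ⟨(List.ofFn c : Multiset α), by simp⟩)
          (fun _ _ => mem_coe.2 (mem_univ _)) fun c hc d hd hcd => List.ofFn_injective ?_
        simp only [coe_filter, mem_univ, true_and] at hc hd
        exact List.Perm.eq_of_sortedLE (List.sortedLE_ofFn_iff.2 hc)
          (List.sortedLE_ofFn_iff.2 hd) (Multiset.coe_eq_coe.1 (congrArg Subtype.val hcd))
    _ = (Fintype.card α + K - 1).choose K := by rw [card_univ, Sym.card_sym_eq_choose]

theorem statement7_general (K : ℕ)
    (ε Δ m : ℝ) (hε : 0 ≤ ε) (hΔ0 : 0 ≤ Δ) (hΔ1 : Δ < 1)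
    (γ : ℕ → ℝ) :
    (∀ (π : Equiv.Perm (Fin K)) (p p' : Fin K → ℝ),
        privCost K m ε γ (p ∘ π) (p' ∘ π) = privCost K m ε γ p p')
    ∧ ∃ P : Finset ((Fin K → ℝ) × (Fin K → ℝ)),
        P.card ≤ (K + 7).choose 7 ∧
        (∀ qq ∈ P, ∀ i, (qq.1 i, qq.2 i) ∈ Corners ε Δ) ∧
        ∀ p p' : Fin K → ℝ, (∀ i, Feas ε Δ (p i) (p' i)) →
          ∃ qq ∈ P, privCost K m ε γ p p' ≤ privCost K m ε γ qq.1 qq.2 := by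
  let toPair (w : Fin K → ℝ × ℝ) : (Fin K → ℝ) × (Fin K → ℝ) := (Prod.fst ∘ w, Prod.snd ∘ w)
  refine ⟨privCost_comp_perm K m ε γ,
    ({c : Fin K → Fin 8 | Monotone c} : Finset _).image (toPair ∘ (cornerVec ε Δ ∘ ·)),
    card_image_le.trans ?_, ?_, fun p p' hfeas => ?_⟩
  · calc _ ≤ (Fintype.card (Fin 8) + K - 1).choose K := card_filter_monotone_le K
      _ = (K + 7).choose 7 := by
        rw [Fintype.card_fin, show 8 + K - 1 = K + 7 by omega, Nat.choose_symm_add]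
  · simp only [mem_image]
    rintro _ ⟨c, -, rfl⟩ i
    exact range_cornerVec ε Δ ▸ Set.mem_range_self (c i)
  obtain ⟨w, hw, hle⟩ := exists_forall_mem_le_of_update (T := Corners ε Δ)
    (Φ := fun w => privCost K m ε γ (Prod.fst ∘ w) (Prod.snd ∘ w))
    (fun _ => feas_of_mem_corners hε hΔ0 hΔ1) (exists_mem_corners_privCost_le_update hε m γ)
    (fun i => (p i, p' i)) hfeas
  choose c hc using fun i => range_cornerVec ε Δ ▸ hw i
  refine ⟨toPair (w ∘ Tuple.sort c), mem_image.2 ⟨c ∘ Tuple.sort c, ?_, ?_⟩, ?_⟩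
  · simpa using Tuple.monotone_sort c
  · simp [toPair, comp_def, hc]
  · calc privCost K m ε γ p p' ≤ privCost K m ε γ (Prod.fst ∘ w) (Prod.snd ∘ w) := hle
      _ = _ := (privCost_comp_perm K m ε γ (Tuple.sort c) _ _).symm

/-- (i) the privacy cost objective is invariant under simultaneous
permutation of the coordinates of `p` and `p'`; (ii) the infinitely many privacy
constraints reduce to a finite set `P` of at most `C(K+7,7)` corner-point pairs:
the objective on every feasible pair is dominated by its value at some element
of `P`. -/
theorem statement7 (K : ℕ) (hK : Odd K) (hKpos : 0 < K)
    (ε Δ m : ℝ) (hε : 0 ≤ ε) (hΔ0 : 0 ≤ Δ) (hΔ1 : Δ < 1) (hm : 0 ≤ m)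
    (γ : ℕ → ℝ) (hγ01 : ∀ l ≤ K, 0 ≤ γ l ∧ γ l ≤ 1) :
    (∀ (π : Equiv.Perm (Fin K)) (p p' : Fin K → ℝ),
        privCost K m ε γ (p ∘ π) (p' ∘ π) = privCost K m ε γ p p')
    ∧ ∃ P : Finset ((Fin K → ℝ) × (Fin K → ℝ)),
        P.card ≤ (K + 7).choose 7 ∧
        (∀ qq ∈ P, ∀ i, (qq.1 i, qq.2 i) ∈ Corners ε Δ) ∧
        ∀ p p' : Fin K → ℝ, (∀ i, Feas ε Δ (p i) (p' i)) →
          ∃ qq ∈ P, privCost K m ε γ p p' ≤ privCost K m ε γ qq.1 qq.2 :=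
  statement7_general K ε Δ m hε hΔ0 hΔ1 γ
end

section
/- Let K be an odd positive integer, ε ≥ 0, and m ≥ 0 a real number. Let h : {0,…,K} → [0,1] satisfy h(l) + h(K−l) = 1 for all l and h(l+1) ≥ h(l) for all 0 ≤ l ≤ K−1, define γ(l) = 1 − 2h(l) for l ≤ (K−1)/2 and γ(l) = 2h(l) − 1 for l ≥ (K+1)/2, and assume γ((K−1)/2) > 0 and γ((K+1)/2) > 0 and 0 ≤ γ(l) ≤ 1 for all l. Suppose that: (a) for all p' ∈ [0, 1/(1+e^ε)], e^{mε} · Σ_{x=0}^{K−1} C(K−1,x)(p')^x(1−p')^{K−1−x}·(h(x+1)−h(x)) ≥ e^{ε} · Σ_{x=0}^{K−1} C(K−1,x)(e^ε p')^x(1−e^ε p')^{K−1−x}·(h(x+1)−h(x)); and (b) for all p ∈ [1/(1+e^{−ε}), 1], e^{(m+1)ε} · Σ_{x=0}^{K−1} C(K−1,x)(1−e^ε(1−p))^x(e^ε(1−p))^{K−1−x}·(h(x+1)−h(x)) ≥ Σ_{x=0}^{K−1} C(K−1,x) p^x (1−p)^{K−1−x}·(h(x+1)−h(x)). Then for every (p,p')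 ∈ F(ε,0): Σ_{l=0}^{(K−1)/2} ( e^{mε} b(l;K,p') − b(l;K,p) ) γ(l) + Σ_{l=(K+1)/2}^{K} ( b(l;K,p) − e^{mε} b(l;K,p') ) γ(l) ≤ e^{mε} − 1, i.e., DaRRM with noise function γ is mε-differentially private. -/
open Finset

/-!
Write `G(p) = E h(X)` for `X ∼ Bin(K, p)`. Since `γ = ±(1 − 2h)` on the two halves, the objective
equals `e^{mε} − 1 − 2 (e^{mε} G(p') − G(p))`, so it suffices that `G(p) ≤ e^{mε} G(p')` on
`F(ε,0)`. The derivative of `G` is `K` times the expectation of `h(X+1) − h(X)` for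
`X ∼ Bin(K − 1, p)`, so `G` is nondecreasing, and (a), (b) say exactly that
`t ↦ e^{mε} G(t) − G(e^ε t)` is nondecreasing on `[0, 1/(1+e^ε)]` and
`t ↦ e^{mε} G(1 − e^ε(1 − t)) − G(t)` is nondecreasing on `[e^ε/(1+e^ε), 1]`. Both are
nonnegative at their left endpoints (the second one's value there is the first one's value at its
right endpoint), and `p ≤ e^ε p'`, `1 − p' ≤ e^ε (1 − p)` on `F(ε,0)` finish the argument by
monotonicity of `G`.
-/

lemma binomPMF_eq_eval (K l : ℕ) (p : ℝ) :
    binomPMF K p l = (bernsteinPolynomial ℝ K l).eval p := by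
  simp [binomPMF, bernsteinPolynomial]

lemma binomPMF_nonneg_s11 (K l : ℕ) {p : ℝ} (hp₀ : 0 ≤ p) (hp₁ : p ≤ 1) : 0 ≤ binomPMF K p l := by
  have : 0 ≤ 1 - p := by linarith
  unfold binomPMF; positivity

lemma binomPMF_succ_self (n : ℕ) (p : ℝ) : binomPMF n p (n + 1) = 0 := by
  simp [binomPMF]

lemma sum_binomPMF (K : ℕ) (p : ℝ) : ∑ l ∈ range (K + 1), binomPMF K p l = 1 := by
  simpa [binomPMF_eq_eval, Polynomial.eval_finsetSum] using
    congr_arg (Polynomial.eval p) (bernsteinPolynomial.sum ℝ K)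

lemma hasDerivAt_binomPMF_zero (n : ℕ) (p : ℝ) :
    HasDerivAt (binomPMF (n + 1) · 0) (-(n + 1) * binomPMF n p 0) p := by
  simpa [binomPMF_eq_eval, bernsteinPolynomial.derivative_zero] using
    (bernsteinPolynomial ℝ (n + 1) 0).hasDerivAt p

lemma hasDerivAt_binomPMF_succ (n l : ℕ) (p : ℝ) :
    HasDerivAt (binomPMF (n + 1) · (l + 1))
      ((n + 1) * (binomPMF n p l - binomPMF n p (l + 1))) p := by
  simpa [binomPMF_eq_eval, bernsteinPolynomial.derivative_succ_aux] using
    (bernsteinPolynomial ℝ (n + 1) (l + 1)).hasDerivAt p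

noncomputable def binomExpect (K : ℕ) (f : ℕ → ℝ) (p : ℝ) : ℝ :=
  ∑ l ∈ range (K + 1), binomPMF K p l * f l

lemma hasDerivAt_binomExpect_succ (n : ℕ) (f : ℕ → ℝ) (p : ℝ) :
    HasDerivAt (binomExpect (n + 1) f)
      ((n + 1) * binomExpect n (fun l => f (l + 1) - f l) p) p := by
  have hsplit : binomExpect (n + 1) f = fun q =>
      binomPMF (n + 1) q 0 * f 0 + ∑ l ∈ range (n + 1), binomPMF (n + 1) q (l + 1) * f (l + 1) := by
    ext q
    rw [binomExpect, sum_range_succ', add_comm]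
  rw [hsplit]
  refine (((hasDerivAt_binomPMF_zero n p).mul_const (f 0)).fun_add
    (HasDerivAt.fun_sum (u := range (n + 1)) fun l _ =>
      (hasDerivAt_binomPMF_succ n l p).mul_const (f (l + 1)))).congr_deriv ?_
  -- summation by parts; the boundary term `binomPMF n p (n + 1)` vanishes
  have hshift : ∑ l ∈ range (n + 1), binomPMF n p (l + 1) * f (l + 1) + binomPMF n p 0 * f 0
      = ∑ l ∈ range (n + 1), binomPMF n p l * f l := by
    rw [← sum_range_succ' (fun l => binomPMF n p l * f l), sum_range_succ, binomPMF_succ_self,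
      zero_mul, add_zero]
  simp only [binomExpect, mul_sub, sub_mul, sum_sub_distrib, mul_assoc, ← mul_sum]
  linear_combination (-(n + 1 : ℝ)) * hshift

lemma binomExpect_nonneg {K : ℕ} {f : ℕ → ℝ} (hf : ∀ l ≤ K, 0 ≤ f l) {p : ℝ} (hp₀ : 0 ≤ p)
    (hp₁ : p ≤ 1) : 0 ≤ binomExpect K f p :=
  sum_nonneg fun l hl =>
    mul_nonneg (binomPMF_nonneg_s11 K l hp₀ hp₁) (hf l (Nat.lt_succ_iff.mp (mem_range.mp hl)))

lemma binomExpect_at_zero (K : ℕ) (f : ℕ → ℝ) : binomExpect K f 0 = f 0 := by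
  simp [binomExpect, binomPMF, sum_range_succ']

lemma monotoneOn_Icc_of_hasDerivAt_nonneg {f f' : ℝ → ℝ} {a b : ℝ}
    (hf : ∀ x, HasDerivAt f (f' x) x) (hf' : ∀ x ∈ Set.Icc a b, 0 ≤ f' x) :
    MonotoneOn f (Set.Icc a b) :=
  monotoneOn_of_hasDerivWithinAt_nonneg (convex_Icc a b)
    (fun x _ => (hf x).continuousAt.continuousWithinAt) (fun x _ => (hf x).hasDerivWithinAt)
    (fun x hx => hf' x (interior_subset hx))

lemma apply_mul_le_mul_apply {G g : ℝ → ℝ} {a E c : ℝ} (hG : ∀ x, HasDerivAt G (g x) x)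
    (hg : ∀ t ∈ Set.Icc 0 c, a * g (a * t) ≤ E * g t) (hG₀ : G 0 ≤ E * G 0) {t : ℝ}
    (ht : t ∈ Set.Icc 0 c) : G (a * t) ≤ E * G t := by
  have hmono : MonotoneOn (fun t => E * G t - G (a * t)) (Set.Icc 0 c) :=
    monotoneOn_Icc_of_hasDerivAt_nonneg
      (fun t => ((hG t).const_mul E).sub ((hG (a * t)).comp t ((hasDerivAt_id t).const_mul a)))
      fun t ht => by have := hg t ht; linarith
  have := hmono ⟨le_rfl, ht.1.trans ht.2⟩ ht ht.1
  simp only [mul_zero] at this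
  linarith

lemma apply_le_mul_apply_one_sub_mul_one_sub {G g : ℝ → ℝ} {a E c : ℝ}
    (hG : ∀ x, HasDerivAt G (g x) x) (hg : ∀ t ∈ Set.Icc c 1, g t ≤ E * a * g (1 - a * (1 - t)))
    (hc : G c ≤ E * G (1 - a * (1 - c))) {t : ℝ} (ht : t ∈ Set.Icc c 1) :
    G t ≤ E * G (1 - a * (1 - t)) := by
  have hinner : ∀ t : ℝ, HasDerivAt (fun t => 1 - a * (1 - t)) a t := fun t => by
    simpa using (((hasDerivAt_id t).const_sub 1).const_mul a).const_sub 1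
  have hmono : MonotoneOn (fun t => E * G (1 - a * (1 - t)) - G t) (Set.Icc c 1) :=
    monotoneOn_Icc_of_hasDerivAt_nonneg
      (fun t => (((hG _).comp t (hinner t)).const_mul E).sub (hG t))
      fun t ht => by have := hg t ht; linarith
  have := hmono ⟨le_rfl, ht.1.trans ht.2⟩ ht ht.1
  simp only at this
  linarith

theorem apply_le_mul_apply_of_feas0 {G g : ℝ → ℝ} {ε E : ℝ} (hE : 0 ≤ E)
    (hG : ∀ x, HasDerivAt G (g x) x) (hg : ∀ x ∈ Set.Icc 0 1, 0 ≤ g x) (hG₀ : G 0 ≤ E * G 0)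
    (hA : ∀ t ∈ Set.Icc 0 (1 / (1 + Real.exp ε)),
      Real.exp ε * g (Real.exp ε * t) ≤ E * g t)
    (hB : ∀ t ∈ Set.Icc (1 / (1 + Real.exp (-ε))) 1,
      g t ≤ E * Real.exp ε * g (1 - Real.exp ε * (1 - t)))
    {p p' : ℝ} (hF : Feas0 ε p p') : G p ≤ E * G p' := by
  obtain ⟨hp₀, hp₁, hp'₀, hp'₁, hpp', -, -, hpp'c⟩ := hF
  have hthreshold : 1 / (1 + Real.exp (-ε)) = Real.exp ε * (1 / (1 + Real.exp ε)) := by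
    rw [Real.exp_neg]; field_simp; ring
  set a := Real.exp ε
  set q := 1 / (1 + a) with hq_def
  have ha : 0 < a := Real.exp_pos ε
  have hq₀ : 0 ≤ q := by positivity
  have hq : 1 - a * q = q := by rw [hq_def]; field_simp; ring
  have haq : a * q ≤ 1 := by linarith
  have hGmono : MonotoneOn G (Set.Icc 0 1) := monotoneOn_Icc_of_hasDerivAt_nonneg hG hg
  have hψ : ∀ t ∈ Set.Icc 0 q, G (a * t) ≤ E * G t := fun t ht =>
    apply_mul_le_mul_apply hG hA hG₀ ht
  have hφ : ∀ t ∈ Set.Icc (a * q) 1, G t ≤ E * G (1 - a * (1 - t)) := fun t ht =>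
    apply_le_mul_apply_one_sub_mul_one_sub hG (hthreshold ▸ hB)
      (by rw [hq, hq]; exact hψ q ⟨hq₀, le_rfl⟩) ht
  rcases le_or_gt p (a * q) with hp | hp
  · rcases le_or_gt p' q with hp' | hp'
    · have hap' : a * p' ≤ a * q := mul_le_mul_of_nonneg_left hp' ha.le
      calc G p ≤ G (a * p') := hGmono ⟨hp₀, hp₁⟩ ⟨by positivity, hap'.trans haq⟩ hpp'
        _ ≤ E * G p' := hψ p' ⟨hp'₀, hp'⟩
    · calc G p ≤ G (a * q) := hGmono ⟨hp₀, hp₁⟩ ⟨by positivity, haq⟩ hp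
        _ ≤ E * G q := hψ q ⟨hq₀, le_rfl⟩
        _ ≤ E * G p' := mul_le_mul_of_nonneg_left (hGmono ⟨hq₀, by linarith⟩ ⟨hp'₀, hp'₁⟩ hp'.le) hE
  · have hap : a * (1 - p) ≤ a * q := mul_le_mul_of_nonneg_left (by linarith) ha.le
    have hap₀ : 0 ≤ a * (1 - p) := mul_nonneg ha.le (by linarith)
    calc G p ≤ E * G (1 - a * (1 - p)) := hφ p ⟨hp.le, hp₁⟩
      _ ≤ E * G p' :=
        mul_le_mul_of_nonneg_left (hGmono ⟨by linarith, by linarith⟩ ⟨hp'₀, hp'₁⟩ (by linarith)) hE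

lemma sum_mul_one_sub_two_mul (K : ℕ) (h : ℕ → ℝ) (E p p' : ℝ) :
    ∑ l ∈ range (K + 1), (E * binomPMF K p' l - binomPMF K p l) * (1 - 2 * h l)
      = E - 1 - 2 * (E * binomExpect K h p' - binomExpect K h p) := by
  calc _ = E * ∑ l ∈ range (K + 1), binomPMF K p' l - ∑ l ∈ range (K + 1), binomPMF K p l
        - 2 * (E * binomExpect K h p' - binomExpect K h p) := by
        simp only [binomExpect, mul_sum, ← sum_sub_distrib]
        exact sum_congr rfl fun l _ => by ring
    _ = _ := by rw [sum_binomPMF, sum_binomPMF, mul_one]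

lemma privacy_objective_eq {K : ℕ} {h γ : ℕ → ℝ}
    (hγlo : ∀ l, l ≤ (K - 1) / 2 → γ l = 1 - 2 * h l)
    (hγhi : ∀ l, (K + 1) / 2 ≤ l → γ l = 2 * h l - 1) (E p p' : ℝ) :
    (∑ l ∈ range ((K + 1) / 2), (E * binomPMF K p' l - binomPMF K p l) * γ l)
      + (∑ l ∈ Icc ((K + 1) / 2) K, (binomPMF K p l - E * binomPMF K p' l) * γ l)
      = E - 1 - 2 * (E * binomExpect K h p' - binomExpect K h p) := by
  rw [← sum_mul_one_sub_two_mul, ← sum_range_add_sum_Ico _ (show (K + 1) / 2 ≤ K + 1 by omega),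
    ← Finset.Ico_add_one_right_eq_Icc]
  congr 1
  · refine sum_congr rfl fun l hl => ?_
    rw [hγlo l (by have := mem_range.mp hl; omega)]
  · refine sum_congr rfl fun l hl => ?_
    rw [hγhi l (mem_Ico.mp hl).1]
    ring

theorem statement11_general (K : ℕ) (hKpos : 0 < K)
    (ε m : ℝ) (hε : 0 ≤ ε) (hm : 0 ≤ m)
    (h γ : ℕ → ℝ)
    (hh01 : ∀ l ≤ K, 0 ≤ h l ∧ h l ≤ 1)
    (hhmono : ∀ l ≤ K - 1, h l ≤ h (l + 1))
    (hγlo : ∀ l, l ≤ (K - 1) / 2 → γ l = 1 - 2 * h l)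
    (hγhi : ∀ l, (K + 1) / 2 ≤ l → γ l = 2 * h l - 1)
    (hcondA : ∀ p' : ℝ, 0 ≤ p' → p' ≤ 1 / (1 + Real.exp ε) →
      Real.exp ε * ∑ x ∈ Finset.range K, ((K - 1).choose x : ℝ) *
          (Real.exp ε * p') ^ x * (1 - Real.exp ε * p') ^ (K - 1 - x) * (h (x + 1) - h x)
        ≤ Real.exp (m * ε) * ∑ x ∈ Finset.range K, ((K - 1).choose x : ℝ) *
          p' ^ x * (1 - p') ^ (K - 1 - x) * (h (x + 1) - h x))
    (hcondB : ∀ p : ℝ, 1 / (1 + Real.exp (-ε)) ≤ p → p ≤ 1 →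
      (∑ x ∈ Finset.range K, ((K - 1).choose x : ℝ) *
          p ^ x * (1 - p) ^ (K - 1 - x) * (h (x + 1) - h x))
        ≤ Real.exp ((m + 1) * ε) * ∑ x ∈ Finset.range K, ((K - 1).choose x : ℝ) *
          (1 - Real.exp ε * (1 - p)) ^ x * (Real.exp ε * (1 - p)) ^ (K - 1 - x) *
          (h (x + 1) - h x)) :
    ∀ p p' : ℝ, Feas0 ε p p' →
      (∑ l ∈ Finset.range ((K + 1) / 2),
          (Real.exp (m * ε) * binomPMF K p' l - binomPMF K p l) * γ l)
        + (∑ l ∈ Finset.Icc ((K + 1) / 2) K,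
          (binomPMF K p l - Real.exp (m * ε) * binomPMF K p' l) * γ l)
        ≤ Real.exp (m * ε) - 1 := by
  intro p p' hF
  rw [privacy_objective_eq hγlo hγhi]
  obtain ⟨n, rfl⟩ := Nat.exists_eq_add_one_of_ne_zero hKpos.ne'
  simp only [Nat.add_sub_cancel] at hhmono hcondA hcondB
  set E := Real.exp (m * ε)
  have hE : 1 ≤ E := Real.one_le_exp (mul_nonneg hm hε)
  have hn : (0 : ℝ) ≤ n + 1 := by positivity
  set D := binomExpect n (fun l => h (l + 1) - h l)
  have hD : ∀ x ∈ Set.Icc (0 : ℝ) 1, 0 ≤ D x :=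
    fun x hx => binomExpect_nonneg (fun l hl => sub_nonneg.mpr (hhmono l hl)) hx.1 hx.2
  have hA : ∀ t ∈ Set.Icc 0 (1 / (1 + Real.exp ε)), Real.exp ε * D (Real.exp ε * t) ≤ E * D t :=
    fun t ht => hcondA t ht.1 ht.2
  have hB : ∀ t ∈ Set.Icc (1 / (1 + Real.exp (-ε))) 1,
      D t ≤ E * Real.exp ε * D (1 - Real.exp ε * (1 - t)) := fun t ht => by
    have := hcondB t ht.1 ht.2
    rw [add_one_mul, Real.exp_add] at this
    simpa only [D, binomExpect, binomPMF, sub_sub_cancel] using this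
  have hG : binomExpect (n + 1) h p ≤ E * binomExpect (n + 1) h p' := by
    refine apply_le_mul_apply_of_feas0 (by positivity) (hasDerivAt_binomExpect_succ n h)
      (fun x hx => mul_nonneg hn (hD x hx)) ?_ (fun t ht => ?_) (fun t ht => ?_) hF
    · rw [binomExpect_at_zero]
      exact le_mul_of_one_le_left (hh01 0 (Nat.zero_le _)).1 hE
    · linarith [mul_le_mul_of_nonneg_left (hA t ht) hn]
    · linarith [mul_le_mul_of_nonneg_left (hB t ht) hn]
  linarith

/-- sufficient conditions for a "symmetric form family" noise
function `γ` (built from `h` with `h(l)+h(K−l)=1`, `h` nondecreasing) to make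
DaRRM_γ `mε`-differentially private: if the two expectation inequalities (a)
and (b) hold, then the i.i.d. privacy cost objective is at most `e^{mε} − 1`
on all of `F(ε,0)`. -/
theorem statement11 (K : ℕ) (hK : Odd K) (hKpos : 0 < K)
    (ε m : ℝ) (hε : 0 ≤ ε) (hm : 0 ≤ m)
    (h γ : ℕ → ℝ)
    (hh01 : ∀ l ≤ K, 0 ≤ h l ∧ h l ≤ 1)
    (hhsym : ∀ l ≤ K, h l + h (K - l) = 1)
    (hhmono : ∀ l ≤ K - 1, h l ≤ h (l + 1))
    (hγlo : ∀ l, l ≤ (K - 1) / 2 → γ l = 1 - 2 * h l)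
    (hγhi : ∀ l, (K + 1) / 2 ≤ l → γ l = 2 * h l - 1)
    (hγpos1 : 0 < γ ((K - 1) / 2)) (hγpos2 : 0 < γ ((K + 1) / 2))
    (hγ01 : ∀ l ≤ K, 0 ≤ γ l ∧ γ l ≤ 1)
    (hcondA : ∀ p' : ℝ, 0 ≤ p' → p' ≤ 1 / (1 + Real.exp ε) →
      Real.exp ε * ∑ x ∈ Finset.range K, ((K - 1).choose x : ℝ) *
          (Real.exp ε * p') ^ x * (1 - Real.exp ε * p') ^ (K - 1 - x) * (h (x + 1) - h x)
        ≤ Real.exp (m * ε) * ∑ x ∈ Finset.range K, ((K - 1).choose x : ℝ) *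
          p' ^ x * (1 - p') ^ (K - 1 - x) * (h (x + 1) - h x))
    (hcondB : ∀ p : ℝ, 1 / (1 + Real.exp (-ε)) ≤ p → p ≤ 1 →
      (∑ x ∈ Finset.range K, ((K - 1).choose x : ℝ) *
          p ^ x * (1 - p) ^ (K - 1 - x) * (h (x + 1) - h x))
        ≤ Real.exp ((m + 1) * ε) * ∑ x ∈ Finset.range K, ((K - 1).choose x : ℝ) *
          (1 - Real.exp ε * (1 - p)) ^ x * (Real.exp ε * (1 - p)) ^ (K - 1 - x) *
          (h (x + 1) - h x)) :
    ∀ p p' : ℝ, Feas0 ε p p' →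
      (∑ l ∈ Finset.range ((K + 1) / 2),
          (Real.exp (m * ε) * binomPMF K p' l - binomPMF K p l) * γ l)
        + (∑ l ∈ Finset.Icc ((K + 1) / 2) K,
          (binomPMF K p l - Real.exp (m * ε) * binomPMF K p' l) * γ l)
        ≤ Real.exp (m * ε) - 1 :=
  statement11_general K hKpos ε m hε hm h γ hh01 hhmono hγlo hγhi hcondA hcondB
end
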